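/- Let r ≥ 3 and let G be an r-partite graph on parts (V_1,...,V_r) of size n with minimum cross-degree at least (1 − δ)n where 0 ≤ δ ≤ 1/(2r). Then for every vertex x of G and every I ⊆ [r] not containing the index of the part of x, the number of cliques in K_I(G) containing x is at most k_{I∖{i}}(G) for each i ∈ I with x adjacent to part V_i — in particular, for every j ∈ [r] and z ∈ V_j and I ⊆ [r] with j ∈ I, the number of cliques of K_I(G) containing z is at most 2·k_I(G)/n. -/

import Mathlib

open Finset
open scoped Classical

/-- The set of cliques of `G` having exactly one vertex in part `V_i` for each `i ∈ I`. -/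
noncomputable def partCliques {V : Type*} [Fintype V] [DecidableEq V] {r : ℕ}
    (G : SimpleGraph V) (P : V → Fin r) (I : Finset (Fin r)) : Finset (Finset V) :=
  Finset.univ.filter fun S => G.IsClique (S : Set V) ∧ S.image P = I ∧ S.card = I.card

/-!
Deleting `z` maps the cliques of `K_I(G)` through `z ∈ V_j` injectively into `K_{I∖{j}}(G)`.
Conversely, each vertex of `T ∈ K_{I∖{j}}(G)` misses at most `δn` vertices of `V_j`, so `T` has
at least `(1 - rδ)n ≥ n/2` common neighbours in `V_j`, each extending `T` to a distinct clique of
`K_I(G)`. Hence `k_{I∖{j}}(G) · n/2 ≤ k_I(G)`.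
-/

section

variable {V : Type*} [Fintype V] [DecidableEq V] {r : ℕ} {G : SimpleGraph V} {P : V → Fin r}
  {I : Finset (Fin r)} {K T : Finset V}

lemma mem_partCliques :
    K ∈ partCliques G P I ↔ G.IsClique (K : Set V) ∧ K.image P = I ∧ K.card = I.card := by
  simp [partCliques]

lemma apply_mem_of_mem_partCliques (hK : K ∈ partCliques G P I) {v : V} (hv : v ∈ K) :
    P v ∈ I :=
  (mem_partCliques.1 hK).2.1 ▸ mem_image_of_mem P hv

lemma apply_ne_of_mem_partCliques_erase {j : Fin r} (hT : T ∈ partCliques G P (I.erase j))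
    {t : V} (ht : t ∈ T) : P t ≠ j :=
  (mem_erase.1 (apply_mem_of_mem_partCliques hT ht)).1

lemma filter_mem_partCliques_eq_empty {x : V} (hx : P x ∉ I) :
    (partCliques G P I).filter (fun K => x ∈ K) = ∅ :=
  filter_eq_empty_iff.2 fun _ hK hxK => hx (apply_mem_of_mem_partCliques hK hxK)

lemma erase_mem_partCliques_erase {z : V} (hK : K ∈ partCliques G P I) (hz : z ∈ K) :
    K.erase z ∈ partCliques G P (I.erase (P z)) := by
  obtain ⟨hcl, hIm, hcard⟩ := mem_partCliques.1 hK
  have hzI : P z ∈ I := apply_mem_of_mem_partCliques hK hz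
  have hcard' : (K.erase z).card = (I.erase (P z)).card := by
    rw [card_erase_of_mem hz, card_erase_of_mem hzI, hcard]
  refine mem_partCliques.2 ⟨hcl.subset (by simp), ?_, hcard'⟩
  have hsub : I.erase (P z) ⊆ (K.erase z).image P := hIm ▸ erase_image_subset_image_erase P K z
  exact (eq_of_subset_of_card_le hsub (card_image_le.trans hcard'.le)).symm

lemma card_filter_mem_partCliques_le (z : V) :
    ((partCliques G P I).filter fun K => z ∈ K).card ≤
      (partCliques G P (I.erase (P z))).card := by
  refine card_le_card_of_injOn (·.erase z) (fun K hK => ?_) (fun K₁ hK₁ K₂ hK₂ h => ?_)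
  · rw [coe_filter] at hK
    exact erase_mem_partCliques_erase hK.1 hK.2
  · rw [coe_filter] at hK₁ hK₂
    rw [← insert_erase hK₁.2, ← insert_erase hK₂.2]
    exact congrArg (insert z) h

variable (G P)

noncomputable def commonPartNbrs (j : Fin r) (T : Finset V) : Finset V :=
  univ.filter fun v => P v = j ∧ ∀ t ∈ T, G.Adj t v

variable {G P}

lemma card_part_le_card_commonPartNbrs_add (j : Fin r) (T : Finset V) :
    (univ.filter fun v => P v = j).card ≤ (commonPartNbrs G P j T).card +
      ∑ t ∈ T, (univ.filter fun u => P u = j ∧ ¬ G.Adj t u).card := by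
  calc (univ.filter fun v => P v = j).card
      ≤ (commonPartNbrs G P j T ∪
          T.biUnion fun t => univ.filter fun u => P u = j ∧ ¬ G.Adj t u).card := by
        refine card_le_card fun v hv => ?_
        by_cases h : ∀ t ∈ T, G.Adj t v
        all_goals simp_all [commonPartNbrs]
    _ ≤ _ := (card_union_le _ _).trans (Nat.add_le_add_left card_biUnion_le _)

lemma card_filter_not_adj_add_card_filter_adj (j : Fin r) (t : V) :
    (univ.filter fun u => P u = j ∧ ¬ G.Adj t u).card +
      (univ.filter fun u => P u = j ∧ G.Adj t u).card = (univ.filter fun v => P v = j).card := by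
  rw [← card_union_of_disjoint (disjoint_filter.2 fun _ _ h h' => h.2 h'.2)]
  congr 1
  ext u
  simp only [mem_union, mem_filter, mem_univ, true_and]
  tauto

lemma card_commonPartNbrs_ge {n : ℕ} {δ : ℝ} {j : Fin r}
    (hsize : (univ.filter fun v => P v = j).card = n)
    (hdeg : ∀ t ∈ T,
      (1 - δ) * n ≤ ((univ.filter fun u => P u = j ∧ G.Adj t u).card : ℝ)) :
    (1 - T.card * δ) * n ≤ (commonPartNbrs G P j T).card := by
  have hnonadj : ∀ t ∈ T,
      ((univ.filter fun u => P u = j ∧ ¬ G.Adj t u).card : ℝ) ≤ δ * n := by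
    intro t ht
    have hsplit := card_filter_not_adj_add_card_filter_adj (G := G) (P := P) j t
    rw [hsize] at hsplit
    have hsplitR : ((_ + _ : ℕ) : ℝ) = n := congrArg Nat.cast hsplit
    push_cast at hsplitR
    linarith [hdeg t ht]
  have hsum := sum_le_sum hnonadj
  have hcover : (n : ℝ) ≤ (commonPartNbrs G P j T).card +
      ∑ t ∈ T, ((univ.filter fun u => P u = j ∧ ¬ G.Adj t u).card : ℝ) := by
    exact_mod_cast hsize ▸ card_part_le_card_commonPartNbrs_add j T
  rw [sum_const, nsmul_eq_mul] at hsum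
  linarith

lemma notMem_of_mem_commonPartNbrs {j : Fin r} (hT : T ∈ partCliques G P (I.erase j)) {v : V}
    (hv : v ∈ commonPartNbrs G P j T) : v ∉ T := fun hvT =>
  apply_ne_of_mem_partCliques_erase hT hvT (mem_filter.1 hv).2.1

lemma insert_mem_partCliques {j : Fin r} (hj : j ∈ I) (hT : T ∈ partCliques G P (I.erase j))
    {v : V} (hv : v ∈ commonPartNbrs G P j T) : insert v T ∈ partCliques G P I := by
  obtain ⟨hcl, hIm, hcard⟩ := mem_partCliques.1 hT
  obtain ⟨hvj, hvT⟩ := (mem_filter.1 hv).2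
  refine mem_partCliques.2 ⟨?_, ?_, ?_⟩
  · rw [coe_insert]
    exact hcl.insert fun t ht _ => (hvT t ht).symm
  · rw [image_insert, hIm, hvj, insert_erase hj]
  · rw [card_insert_of_notMem (notMem_of_mem_commonPartNbrs hT hv), hcard,
      card_erase_add_one hj]

lemma sum_card_commonPartNbrs_le {j : Fin r} (hj : j ∈ I) :
    ∑ T ∈ partCliques G P (I.erase j), (commonPartNbrs G P j T).card ≤
      (partCliques G P I).card := by
  rw [← card_sigma]
  refine card_le_card_of_injOn (fun p => insert p.2 p.1) (fun p hp => ?_) ?_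
  · rw [mem_coe, mem_sigma] at hp
    exact insert_mem_partCliques hj hp.1 hp.2
  · rintro ⟨T₁, v₁⟩ hp₁ ⟨T₂, v₂⟩ hp₂ h
    simp only [mem_coe, mem_sigma] at hp₁ hp₂ h
    have hv : v₁ = v₂ := by
      have hv₂ : v₂ ∈ insert v₁ T₁ := h ▸ mem_insert_self v₂ T₂
      refine ((mem_insert.1 hv₂).resolve_right fun hv₂T => ?_).symm
      exact apply_ne_of_mem_partCliques_erase hp₁.1 hv₂T (mem_filter.1 hp₂.2).2.1
    subst hv
    have hT : T₁ = T₂ := by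
      rw [← erase_insert (notMem_of_mem_commonPartNbrs hp₁.1 hp₁.2),
        ← erase_insert (notMem_of_mem_commonPartNbrs hp₂.1 hp₂.2), h]
    rw [hT]

lemma card_partCliques_erase_mul_le {n : ℕ} {δ : ℝ} (hδ0 : 0 ≤ δ) (hδ : r * δ ≤ 1 / 2)
    {j : Fin r} (hj : j ∈ I) (hsize : (univ.filter fun v => P v = j).card = n)
    (hdeg : ∀ v : V, P v ≠ j →
      (1 - δ) * n ≤ ((univ.filter fun u => P u = j ∧ G.Adj v u).card : ℝ)) :
    ((partCliques G P (I.erase j)).card : ℝ) * (n / 2) ≤ (partCliques G P I).card := by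
  have hhalf : ∀ T ∈ partCliques G P (I.erase j),
      (n : ℝ) / 2 ≤ (commonPartNbrs G P j T).card := by
    intro T hT
    have hTr : (T.card : ℝ) ≤ r := by
      have := (mem_partCliques.1 hT).2.2 ▸ (card_erase_le.trans (card_le_univ I))
      exact_mod_cast this.trans_eq (Fintype.card_fin r)
    have := card_commonPartNbrs_ge hsize fun t ht =>
      hdeg t (apply_ne_of_mem_partCliques_erase hT ht)
    nlinarith [mul_le_mul_of_nonneg_right hTr hδ0, (n.cast_nonneg : (0 : ℝ) ≤ n)]
  calc ((partCliques G P (I.erase j)).card : ℝ) * (n / 2)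
      ≤ ∑ T ∈ partCliques G P (I.erase j), ((commonPartNbrs G P j T).card : ℝ) := by
        simpa [sum_const, nsmul_eq_mul] using sum_le_sum hhalf
    _ ≤ (partCliques G P I).card := by exact_mod_cast sum_card_commonPartNbrs_le hj

end

theorem stmt_13_general {V : Type*} [Fintype V] [DecidableEq V] {r n : ℕ}
    (δ : ℝ) (hδ0 : 0 ≤ δ) (hδ1 : δ ≤ 1 / (2 * r))
    (G : SimpleGraph V) (P : V → Fin r)
    (hsize : ∀ i : Fin r, (Finset.univ.filter fun v => P v = i).card = n)
    (hdeg : ∀ (ℓ : Fin r) (v : V), P v ≠ ℓ →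
      (1 - δ) * n ≤ ((Finset.univ.filter fun u => P u = ℓ ∧ G.Adj v u).card : ℝ)) :
    (∀ (x : V) (I : Finset (Fin r)), P x ∉ I → ∀ i ∈ I,
      (∃ y, P y = i ∧ G.Adj x y) →
      ((partCliques G P I).filter fun K => x ∈ K).card ≤
        (partCliques G P (I.erase i)).card) ∧
    (∀ (j : Fin r) (z : V) (I : Finset (Fin r)), P z = j → j ∈ I →
      ((((partCliques G P I).filter fun K => z ∈ K).card : ℝ)) ≤
        2 * ((partCliques G P I).card : ℝ) / n) := by
  refine ⟨fun x I hx i _ _ => by simp [filter_mem_partCliques_eq_empty hx], ?_⟩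
  rintro j z I rfl hj
  have hn : (0 : ℝ) < n := by
    exact_mod_cast hsize (P z) ▸ card_pos.2 ⟨z, by simp⟩
  have hrδ : (r : ℝ) * δ ≤ 1 / 2 := by
    have hr : (0 : ℝ) < r := by exact_mod_cast (P z).pos
    calc (r : ℝ) * δ ≤ r * (1 / (2 * r)) := by gcongr
      _ = 1 / 2 := by field_simp
  have hthrough : (((partCliques G P I).filter fun K => z ∈ K).card : ℝ) ≤
      (partCliques G P (I.erase (P z))).card := by
    exact_mod_cast card_filter_mem_partCliques_le z
  have hextend := card_partCliques_erase_mul_le hδ0 hrδ hj (hsize (P z)) (hdeg (P z))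
  rw [le_div_iff₀ hn]
  nlinarith

/-- bounds on the number of cliques of K_I(G) containing a fixed vertex. -/
theorem stmt_13 {V : Type*} [Fintype V] [DecidableEq V] {r n : ℕ} (hr : 3 ≤ r)
    (δ : ℝ) (hδ0 : 0 ≤ δ) (hδ1 : δ ≤ 1 / (2 * r))
    (G : SimpleGraph V) (P : V → Fin r)
    (hpart : ∀ u v, G.Adj u v → P u ≠ P v)
    (hsize : ∀ i : Fin r, (Finset.univ.filter fun v => P v = i).card = n)
    (hdeg : ∀ (ℓ : Fin r) (v : V), P v ≠ ℓ →
      (1 - δ) * n ≤ ((Finset.univ.filter fun u => P u = ℓ ∧ G.Adj v u).card : ℝ)) :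
    (∀ (x : V) (I : Finset (Fin r)), P x ∉ I → ∀ i ∈ I,
      (∃ y, P y = i ∧ G.Adj x y) →
      ((partCliques G P I).filter fun K => x ∈ K).card ≤
        (partCliques G P (I.erase i)).card) ∧
    (∀ (j : Fin r) (z : V) (I : Finset (Fin r)), P z = j → j ∈ I →
      ((((partCliques G P I).filter fun K => z ∈ K).card : ℝ)) ≤
        2 * ((partCliques G P I).card : ℝ) / n) :=
  stmt_13_general δ hδ0 hδ1 G P hsize hdeg
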